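/- arXiv:1307.5482 — 2 statements merged into one kernel-verified Lean document; each statement's English description precedes it below -/
import Mathlib

section
/- Let c₁, c₂, c₃ be pairwise distinct oriented circles with Q(cᵢ − cⱼ) = 0 for all i ≠ j (pairwise orientedly tangent). Then the set of solutions of the oriented Apollonius problem for (c₁, c₂, c₃) is infinite. -/
open RealInnerProductSpace

noncomputable section

/-- The Euclidean plane. -/
abbrev Pl := EuclideanSpace ℝ (Fin 2)

/-- The Lorentz quadratic form `Q(x, r) = ‖x‖² − r²` on the space of oriented circles. -/
def Q (c : Pl × ℝ) : ℝ := ‖c.1‖ ^ 2 - c.2 ^ 2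

/-- Solutions of the oriented Apollonius problem for the oriented circles `c₁, c₂, c₃`:
either an oriented circle `d` with `Q(d − cᵢ) = 0` for all `i`, or an oriented line
`(u, t)` (with `‖u‖ = 1`, representing `{p : ⟪u, p⟫ = t}`) tangent to every `cᵢ`,
i.e. `⟪u, xᵢ⟫ − t = rᵢ` for all `i`. The solution set is the disjoint union of the two. -/
def OrientedApolloniusSolutions (c₁ c₂ c₃ : Pl × ℝ) : Type :=
  {d : Pl × ℝ // Q (d - c₁) = 0 ∧ Q (d - c₂) = 0 ∧ Q (d - c₃) = 0} ⊕
  {l : Pl × ℝ // ‖l.1‖ = 1 ∧ ⟪l.1, c₁.1⟫ - l.2 = c₁.2 ∧ ⟪l.1, c₂.1⟫ - l.2 = c₂.2 ∧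
    ⟪l.1, c₃.1⟫ - l.2 = c₃.2}

/-! The three circles lie on a common null line of the Lorentz form: `v = c₁ - c₂`,
`w = c₂ - c₃` and `v + w = c₁ - c₃` are null, so by polarization `v` and `w` are
orthogonal and every `w + s • v` is null as well. Hence every circle `c₂ + s • (c₁ - c₂)`
is tangent to all three, and these are distinct since `c₁ ≠ c₂`. -/

def lorentzInner (a b : Pl × ℝ) : ℝ := ⟪a.1, b.1⟫ - a.2 * b.2

lemma Q_zero : Q 0 = 0 := by
  simp [Q]

lemma Q_smul (s : ℝ) (a : Pl × ℝ) : Q (s • a) = s ^ 2 * Q a := by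
  simp only [Q, Prod.smul_fst, Prod.smul_snd, norm_smul, Real.norm_eq_abs, smul_eq_mul,
    mul_pow, sq_abs]
  ring

lemma Q_sub_comm (a b : Pl × ℝ) : Q (a - b) = Q (b - a) := by
  rw [← neg_sub, ← neg_one_smul ℝ, Q_smul]
  ring

lemma lorentzInner_comm (a b : Pl × ℝ) : lorentzInner a b = lorentzInner b a := by
  rw [lorentzInner, lorentzInner, real_inner_comm, mul_comm]

lemma lorentzInner_smul_right (a b : Pl × ℝ) (s : ℝ) :
    lorentzInner a (s • b) = s * lorentzInner a b := by
  simp only [lorentzInner, Prod.smul_fst, Prod.smul_snd, real_inner_smul_right, smul_eq_mul]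
  ring

lemma Q_add (a b : Pl × ℝ) : Q (a + b) = Q a + 2 * lorentzInner a b + Q b := by
  simp only [Q, lorentzInner, Prod.fst_add, Prod.snd_add, norm_add_sq_real]
  ring

lemma Q_add_smul_eq_zero {v w : Pl × ℝ} (hv : Q v = 0) (hw : Q w = 0) (hvw : Q (v + w) = 0)
    (s : ℝ) : Q (w + s • v) = 0 := by
  have horth : lorentzInner v w = 0 := by
    rw [Q_add, hv, hw] at hvw
    linarith
  rw [Q_add, Q_smul, lorentzInner_smul_right, lorentzInner_comm, horth, hv, hw]
  ring

lemma Q_add_smul_sub_eq_zero {a b c : Pl × ℝ} (hab : Q (a - b) = 0) (hac : Q (a - c) = 0)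
    (hbc : Q (b - c) = 0) (s : ℝ) : Q (b + s • (a - b) - c) = 0 := by
  have hsum : Q ((a - b) + (b - c)) = 0 := by rwa [sub_add_sub_cancel]
  simpa only [add_sub_right_comm] using Q_add_smul_eq_zero hab hbc hsum s

theorem pairwise_tangent_infinite_solutions_general (c₁ c₂ c₃ : Pl × ℝ)
    (h₁₂ : c₁ ≠ c₂)
    (t₁₂ : Q (c₁ - c₂) = 0) (t₁₃ : Q (c₁ - c₃) = 0) (t₂₃ : Q (c₂ - c₃) = 0) :
    Infinite (OrientedApolloniusSolutions c₁ c₂ c₃) := by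
  have t₁₁ : Q (c₁ - c₁) = 0 := by rw [sub_self, Q_zero]
  have t₂₂ : Q (c₂ - c₂) = 0 := by rw [sub_self, Q_zero]
  have t₂₁ : Q (c₂ - c₁) = 0 := by rwa [Q_sub_comm]
  let circle (s : ℝ) : OrientedApolloniusSolutions c₁ c₂ c₃ :=
    .inl ⟨c₂ + s • (c₁ - c₂), Q_add_smul_sub_eq_zero t₁₂ t₁₁ t₂₁ s,
      Q_add_smul_sub_eq_zero t₁₂ t₁₂ t₂₂ s, Q_add_smul_sub_eq_zero t₁₂ t₁₃ t₂₃ s⟩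
  refine Infinite.of_injective circle fun s t hst => ?_
  have hval := congrArg Subtype.val (Sum.inl_injective hst)
  exact smul_left_injective ℝ (sub_ne_zero.mpr h₁₂) (add_left_cancel hval)

/-- If three pairwise distinct oriented circles are pairwise orientedly tangent, the
oriented Apollonius problem for them has infinitely many solutions. -/
theorem pairwise_tangent_infinite_solutions (c₁ c₂ c₃ : Pl × ℝ)
    (h₁₂ : c₁ ≠ c₂) (h₁₃ : c₁ ≠ c₃) (h₂₃ : c₂ ≠ c₃)
    (t₁₂ : Q (c₁ - c₂) = 0) (t₁₃ : Q (c₁ - c₃) = 0) (t₂₃ : Q (c₂ - c₃) = 0) :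
    Infinite (OrientedApolloniusSolutions c₁ c₂ c₃) :=
  pairwise_tangent_infinite_solutions_general c₁ c₂ c₃ h₁₂ t₁₂ t₁₃ t₂₃
end
end

section
/- Let c₁, c₂, c₃ be oriented circles whose discriminant D = Q(c₁ − c₂) · Q(c₁ − c₃) · Q(c₂ − c₃) is strictly negative. Then the oriented Apollonius problem for (c₁, c₂, c₃) has no solution. -/
open RealInnerProductSpace

noncomputable section

/-! Put `vᵢ = cᵢ − d` for a solution circle `d`: each `vᵢ` is isotropic for `Q`, and
`cᵢ − cⱼ = vᵢ − vⱼ`. For isotropic `v, w` Cauchy–Schwarz gives `|⟪v.1, w.1⟫| ≤ |v.2 w.2|`, so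
`Q (v − w) = 2 (v.2 w.2 − ⟪v.1, w.1⟫)` has the sign of `v.2 w.2`; multiplying the three
factors, `D · (v₁.2 v₂.2 v₃.2)² ≥ 0`, and if some `vᵢ.2` vanishes then `vᵢ = 0` and `D = 0`.
For a solution line `(u, t)`, `rᵢ − rⱼ = ⟪u, xᵢ − xⱼ⟫`, so each `Q (cᵢ − cⱼ) ≥ 0`.
Either way `D ≥ 0`. -/

@[simp]
lemma Q_neg (v : Pl × ℝ) : Q (-v) = Q v := by
  simp [Q]

lemma Q_sub (v w : Pl × ℝ) : Q (v - w) = Q v + Q w - 2 * (⟪v.1, w.1⟫ - v.2 * w.2) := by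
  simp only [Q, Prod.fst_sub, Prod.snd_sub, norm_sub_sq_real]
  ring

lemma eq_zero_of_Q_eq_zero_of_snd_eq_zero {v : Pl × ℝ} (hv : Q v = 0) (h : v.2 = 0) : v = 0 := by
  have : ‖v.1‖ = 0 := by simpa [Q, h] using hv
  exact Prod.ext (norm_eq_zero.mp this) h

lemma Q_sub_mul_nonneg_of_Q_eq_zero {v w : Pl × ℝ} (hv : Q v = 0) (hw : Q w = 0) :
    0 ≤ Q (v - w) * (v.2 * w.2) := by
  have hcs : ⟪v.1, w.1⟫ ^ 2 ≤ (v.2 * w.2) ^ 2 := by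
    have h := real_inner_mul_inner_self_le v.1 w.1
    rw [real_inner_self_eq_norm_sq, real_inner_self_eq_norm_sq] at h
    simp only [Q] at hv hw
    nlinarith
  rw [Q_sub, hv, hw]
  nlinarith [sq_nonneg (⟪v.1, w.1⟫ - v.2 * w.2)]

lemma Q_sub_mul_Q_sub_mul_Q_sub_nonneg {v₁ v₂ v₃ : Pl × ℝ}
    (h₁ : Q v₁ = 0) (h₂ : Q v₂ = 0) (h₃ : Q v₃ = 0) :
    0 ≤ Q (v₁ - v₂) * Q (v₁ - v₃) * Q (v₂ - v₃) := by
  by_cases hr : v₁.2 * v₂.2 * v₃.2 = 0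
  · rcases mul_eq_zero.mp hr with hr₁₂ | hr₃
    · rcases mul_eq_zero.mp hr₁₂ with hr₁ | hr₂
      · simp [eq_zero_of_Q_eq_zero_of_snd_eq_zero h₁ hr₁, h₂]
      · simp [eq_zero_of_Q_eq_zero_of_snd_eq_zero h₂ hr₂, h₁]
    · simp [eq_zero_of_Q_eq_zero_of_snd_eq_zero h₃ hr₃, h₁]
  · have h := mul_nonneg (mul_nonneg (Q_sub_mul_nonneg_of_Q_eq_zero h₁ h₂)
      (Q_sub_mul_nonneg_of_Q_eq_zero h₁ h₃)) (Q_sub_mul_nonneg_of_Q_eq_zero h₂ h₃)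
    refine nonneg_of_mul_nonneg_left (b := (v₁.2 * v₂.2 * v₃.2) ^ 2) ?_ (by positivity)
    linarith

lemma Q_sub_nonneg_of_tangent {u : Pl} {t : ℝ} (hu : ‖u‖ ≤ 1) {a b : Pl × ℝ}
    (ha : ⟪u, a.1⟫ - t = a.2) (hb : ⟪u, b.1⟫ - t = b.2) : 0 ≤ Q (a - b) := by
  have hr : |a.2 - b.2| ≤ ‖a.1 - b.1‖ :=
    calc |a.2 - b.2| = |⟪u, a.1 - b.1⟫| := by rw [inner_sub_right, ← ha, ← hb]; ring_nf
      _ ≤ ‖u‖ * ‖a.1 - b.1‖ := abs_real_inner_le_norm _ _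
      _ ≤ ‖a.1 - b.1‖ := mul_le_of_le_one_left (norm_nonneg _) hu
  simp only [Q, Prod.fst_sub, Prod.snd_sub, sub_nonneg]
  exact sq_le_sq' (abs_le.mp hr).1 (abs_le.mp hr).2

/-- If the discriminant `D = Q(c₁ − c₂) · Q(c₁ − c₃) · Q(c₂ − c₃)` is strictly negative,
the oriented Apollonius problem has no solution. -/
theorem oriented_apollonius_no_solution (c₁ c₂ c₃ : Pl × ℝ)
    (hD : Q (c₁ - c₂) * Q (c₁ - c₃) * Q (c₂ - c₃) < 0) :
    IsEmpty (OrientedApolloniusSolutions c₁ c₂ c₃) := by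
  refine ⟨fun s => hD.not_ge ?_⟩
  rcases s with ⟨d, h₁, h₂, h₃⟩ | ⟨⟨u, t⟩, hu, h₁, h₂, h₃⟩
  · have isotropic : ∀ c : Pl × ℝ, Q (d - c) = 0 → Q (c - d) = 0 := fun c h => by
      rwa [← neg_sub, Q_neg]
    have h := Q_sub_mul_Q_sub_mul_Q_sub_nonneg (isotropic _ h₁) (isotropic _ h₂) (isotropic _ h₃)
    simpa only [sub_sub_sub_cancel_right] using h
  · exact mul_nonneg (mul_nonneg (Q_sub_nonneg_of_tangent hu.le h₁ h₂)
      (Q_sub_nonneg_of_tangent hu.le h₁ h₃)) (Q_sub_nonneg_of_tangent hu.le h₂ h₃)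
end
end
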